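/- Let G be a compact Hausdorff topological group. If cp(G) > 3/40, then the FC-center FC(G) has index at most 3 in G and the derived subgroup G' is contained in FC(G). -/

import Mathlib

/-!
For `x ∉ FC(G)` the centralizer `C(x)` is a closed subgroup of infinite index, hence Haar-null:
by Steinhaus a subgroup of positive measure is open, so of finite index in the compact group `G`.
Because the commuting relation is closed and `G` is compact, centralizers vary upper
semicontinuously, and covering a compact part of `G \ FC(G)` by finitely many open sets over
which the centralizers lie in a fixed set of small measure shows that the commuting pairs
`(x, y)` with `x ∉ FC(G)` are null for `μ × μ`. By symmetry, `cp(G) ≤ μ(FC(G))² = [G : FC(G)]⁻²`,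
so `cp(G) > 3/40 > 1/16` forces `[G : FC(G)] ≤ 3`; then `G ⧸ FC(G)` is cyclic and `G' ≤ FC(G)`.
-/

open MeasureTheory Subgroup
open scoped commutatorElement

/-- The FC-center of a group: the subgroup of elements whose conjugacy class is finite. -/
def fcCenter (G : Type*) [Group G] : Subgroup G where
  carrier := {x : G | {y : G | ∃ g : G, g * x * g⁻¹ = y}.Finite}
  one_mem' := Set.Finite.subset (Set.finite_singleton 1) (by rintro y ⟨g, rfl⟩; simp)
  mul_mem' := by
    intro a b ha hb
    apply (ha.image2 (· * ·) hb).subset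
    rintro y ⟨g, rfl⟩
    exact ⟨_, ⟨g, rfl⟩, _, ⟨g, rfl⟩, by group⟩
  inv_mem' := by
    intro a ha
    apply (ha.image (·⁻¹)).subset
    rintro y ⟨g, rfl⟩
    exact ⟨g * a * g⁻¹, ⟨g, rfl⟩, by group⟩

theorem commutator_mem_commutator' {G : Type*} [Group G] (x y : G) :
    ⁅x, y⁆ ∈ commutator G :=
  Subgroup.commutator_mem_commutator (Subgroup.mem_top x) (Subgroup.mem_top y)

/-- Two groups are isoclinic if there are compatible isomorphisms between their central
quotients and their derived subgroups. -/
def Isoclinic (H K : Type*) [Group H] [Group K] : Prop :=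
  ∃ (α : (H ⧸ Subgroup.center H) ≃* (K ⧸ Subgroup.center K))
    (β : ↥(commutator H) ≃* ↥(commutator K)),
    ∀ (x y : H) (x' y' : K),
      (x' : K ⧸ Subgroup.center K) = α (x : H ⧸ Subgroup.center H) →
      (y' : K ⧸ Subgroup.center K) = α (y : H ⧸ Subgroup.center H) →
      (⟨⁅x', y'⁆, commutator_mem_commutator' x' y'⟩ : ↥(commutator K)) =
        β ⟨⁅x, y⁆, commutator_mem_commutator' x y⟩

open scoped ENNReal

section ClosedRelation

open Set

variable {X Y : Type*} [TopologicalSpace X] [TopologicalSpace Y] [CompactSpace Y]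
  {R : Set (X × Y)}

theorem IsClosed.isOpen_setOf_preimage_mk_subset (hR : IsClosed R) {U : Set Y} (hU : IsOpen U) :
    IsOpen {x | Prod.mk x ⁻¹' R ⊆ U} := by
  have hcompl : {x | Prod.mk x ⁻¹' R ⊆ U}ᶜ = Prod.fst '' (R ∩ univ ×ˢ Uᶜ) := by
    ext x
    simp [not_subset]
  rw [← isClosed_compl_iff, hcompl]
  exact isClosedMap_fst_of_compactSpace _ (hR.inter (isClosed_univ.prod hU.isClosed_compl))

variable [MeasurableSpace Y] (ν : Measure Y) [ν.OuterRegular]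

theorem IsClosed.upperSemicontinuous_measure_preimage_mk (hR : IsClosed R) :
    UpperSemicontinuous fun x ↦ ν (Prod.mk x ⁻¹' R) := by
  intro x₀ ε h
  obtain ⟨U, hRU, hU, hUε⟩ := exists_isOpen_lt_of_lt _ _ h
  filter_upwards [(hR.isOpen_setOf_preimage_mk_subset hU).mem_nhds hRU] with x hx
  exact (measure_mono hx).trans_lt hUε

variable [MeasurableSpace X] [OpensMeasurableSpace X]

theorem IsClosed.measurableSet_setOf_measure_preimage_mk_eq_zero (hR : IsClosed R) :
    MeasurableSet {x | ν (Prod.mk x ⁻¹' R) = 0} :=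
  (hR.upperSemicontinuous_measure_preimage_mk ν).measurable (measurableSet_singleton 0)

variable [OpensMeasurableSpace Y] (μ : Measure X)

theorem IsClosed.measure_prod_inter_prod_univ_le_of_isCompact [SFinite ν] (hR : IsClosed R)
    {K : Set X} (hK : IsCompact K) {ε : ℝ≥0∞} (hε : ∀ x ∈ K, ν (Prod.mk x ⁻¹' R) < ε) :
    μ.prod ν (R ∩ K ×ˢ univ) ≤ ε * μ univ := by
  choose U hRU hU hUε using fun x : K ↦ exists_isOpen_lt_of_lt _ _ (hε x x.2)
  set V : K → Set X := fun i ↦ {x | Prod.mk x ⁻¹' R ⊆ U i}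
  have hV : ∀ i, IsOpen (V i) := fun i ↦ hR.isOpen_setOf_preimage_mk_subset (hU i)
  obtain ⟨t, hKt⟩ :=
    hK.elim_finite_subcover V hV fun x hx ↦ mem_iUnion.2 ⟨⟨x, hx⟩, hRU ⟨x, hx⟩⟩
  -- `R` need not be measurable for the product σ-algebra, so bound a measurable superset.
  set T : Set (X × Y) :=
    (⋃ i ∈ t, V i) ×ˢ univ ∩ ⋂ i ∈ t, ((V i)ᶜ ×ˢ univ ∪ univ ×ˢ U i)
  have hRT : R ∩ K ×ˢ univ ⊆ T := by
    rintro ⟨x, y⟩ ⟨hxyR, hxK, -⟩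
    refine ⟨⟨hKt hxK, trivial⟩, mem_iInter₂.2 fun i _ ↦ ?_⟩
    by_cases hxV : x ∈ V i
    · exact Or.inr ⟨trivial, hxV hxyR⟩
    · exact Or.inl ⟨hxV, trivial⟩
  have hTm : MeasurableSet T :=
    ((t.measurableSet_biUnion fun i _ ↦ (hV i).measurableSet).prod .univ).inter
      (t.measurableSet_biInter fun i _ ↦
        ((hV i).measurableSet.compl.prod .univ).union
          (MeasurableSet.univ.prod (hU i).measurableSet))
  have hsection : ∀ x, ν (Prod.mk x ⁻¹' T) ≤ ε := by
    intro x
    by_cases hx : x ∈ ⋃ i ∈ t, V i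
    · obtain ⟨i, hi, hxV⟩ := mem_iUnion₂.1 hx
      refine (measure_mono fun y hy ↦ ?_).trans (hUε i).le
      rcases mem_iInter₂.1 hy.2 i hi with h | h
      · exact absurd hxV h.1
      · exact h.2
    · have : Prod.mk x ⁻¹' T = ∅ := eq_empty_of_forall_notMem fun y hy ↦ hx hy.1.1
      simp [this]
  calc μ.prod ν (R ∩ K ×ˢ univ) ≤ μ.prod ν T := measure_mono hRT
    _ = ∫⁻ x, ν (Prod.mk x ⁻¹' T) ∂μ := Measure.prod_apply hTm
    _ ≤ ∫⁻ _, ε ∂μ := lintegral_mono hsection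
    _ = ε * μ univ := lintegral_const ε

variable [T2Space X] [μ.InnerRegularCompactLTTop] [IsFiniteMeasure μ] [IsFiniteMeasure ν]

theorem IsClosed.measure_prod_inter_setOf_measure_preimage_mk_eq_zero (hR : IsClosed R) :
    μ.prod ν (R ∩ {x | ν (Prod.mk x ⁻¹' R) = 0} ×ˢ univ) = 0 := by
  set A := {x | ν (Prod.mk x ⁻¹' R) = 0}
  by_contra hne
  obtain ⟨δ, hδ, hδlt⟩ :=
    ENNReal.exists_pos_mul_lt (b := μ.prod ν (R ∩ A ×ˢ univ))
      (ENNReal.add_ne_top.2 ⟨measure_ne_top μ univ, measure_ne_top ν univ⟩) hne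
  obtain ⟨K, hKA, hK, hAK⟩ :=
    (hR.measurableSet_setOf_measure_preimage_mk_eq_zero ν).exists_isCompact_sdiff_lt
      (measure_ne_top μ A) hδ.ne'
  have hcover : R ∩ A ×ˢ univ ⊆ R ∩ K ×ˢ univ ∪ (A \ K) ×ˢ univ := by
    rintro ⟨x, y⟩ ⟨hxyR, hxA, -⟩
    by_cases hxK : x ∈ K
    · exact Or.inl ⟨hxyR, hxK, trivial⟩
    · exact Or.inr ⟨⟨hxA, hxK⟩, trivial⟩
  refine hδlt.not_ge ?_
  calc μ.prod ν (R ∩ A ×ˢ univ)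
      ≤ μ.prod ν (R ∩ K ×ˢ univ) + μ.prod ν ((A \ K) ×ˢ univ) :=
        (measure_mono hcover).trans (measure_union_le _ _)
    _ ≤ δ * μ univ + δ * ν univ := by
      rw [Measure.prod_prod]
      gcongr
      exact hR.measure_prod_inter_prod_univ_le_of_isCompact ν μ hK fun x hx ↦ (hKA hx).symm ▸ hδ
    _ = δ * (μ univ + ν univ) := by ring

end ClosedRelation

section FCCenter

variable {G : Type*} [Group G]

theorem mem_fcCenter_iff_finiteIndex_centralizer {x : G} :
    x ∈ fcCenter G ↔ (centralizer {x}).FiniteIndex := by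
  have horbit : {y : G | ∃ g : G, g * x * g⁻¹ = y} = MulAction.orbit (ConjAct G) x := by
    ext y
    rw [ConjAct.orbit_eq_carrier_conjClasses, ConjClasses.mem_carrier_iff_mk_eq,
      ConjClasses.mk_eq_mk_iff_isConj, isConj_comm, isConj_iff]
    rfl
  have e : MulAction.orbit (ConjAct G) x ≃ G ⧸ centralizer {x} :=
    (MulAction.orbitEquivQuotientStabilizer (ConjAct G) x).trans
      (quotientEquivOfEq (ConjAct.stabilizer_eq_centralizer x))
  rw [finiteIndex_iff_finite_quotient, ← e.finite_iff, Set.finite_coe_iff, ← horbit]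
  rfl

theorem preimage_mk_setOf_mul_comm (x : G) :
    Prod.mk x ⁻¹' {p : G × G | p.1 * p.2 = p.2 * p.1} = centralizer {x} := by
  ext y
  simp [mem_centralizer_iff, eq_comm]

instance : (fcCenter G).Normal where
  conj_mem x hx g := by
    refine Set.Finite.subset hx ?_
    rintro y ⟨h, rfl⟩
    exact ⟨h * g, by group⟩

theorem isMulCommutative_of_card_le_three [Finite G] (h : Nat.card G ≤ 3) :
    IsMulCommutative G := by
  have := Nat.card_pos (α := G)
  interval_cases hG : Nat.card G
  · have := (Nat.card_eq_one_iff_unique.1 hG).1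
    exact (isCyclic_of_subsingleton).isMulCommutative
  · exact (isCyclic_of_prime_card (p := 2) (hp := ⟨Nat.prime_two⟩) hG).isMulCommutative
  · exact (isCyclic_of_prime_card (p := 3) (hp := ⟨Nat.prime_three⟩) hG).isMulCommutative

theorem Subgroup.commutator_le_of_index_le_three (H : Subgroup G) [H.Normal] [H.FiniteIndex]
    (h : H.index ≤ 3) : _root_.commutator G ≤ H := by
  rw [← Normal.quotient_commutative_iff_commutator_le]
  exact isMulCommutative_of_card_le_three (by rwa [← index_eq_card])

end FCCenter

theorem isClosed_setOf_mul_comm {M : Type*} [Mul M] [TopologicalSpace M] [ContinuousMul M]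
    [T2Space M] : IsClosed {p : M × M | p.1 * p.2 = p.2 * p.1} :=
  isClosed_eq (by fun_prop) (by fun_prop)

section CompactGroup

open Topology Pointwise

variable {G : Type*} [Group G] [TopologicalSpace G] [IsTopologicalGroup G] [CompactSpace G]
  [MeasurableSpace G] [BorelSpace G] (μ : Measure G) [μ.IsHaarMeasure]

theorem Subgroup.finiteIndex_of_measure_ne_zero {H : Subgroup G} (hH : MeasurableSet (H : Set G))
    (h : μ H ≠ 0) : H.FiniteIndex := by
  have hHH : (H : Set G) / (H : Set G) ∈ 𝓝 1 :=
    Measure.div_mem_nhds_one_of_haar_pos_ne_top μ H hH (pos_iff_ne_zero.2 h) (measure_ne_top μ _)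
  have hopen : IsOpen (H : Set G) :=
    H.isOpen_of_mem_nhds <| Filter.mem_of_superset hHH <| by
      rintro _ ⟨a, ha, b, hb, rfl⟩
      exact H.div_mem ha hb
  have := H.quotient_finite_of_isOpen hopen
  exact finiteIndex_of_finite_quotient

variable [T2Space G]

theorem mem_fcCenter_iff_measure_centralizer_ne_zero {x : G} :
    x ∈ fcCenter G ↔ μ (centralizer {x}) ≠ 0 := by
  have hC : MeasurableSet (centralizer {x} : Set G) := by
    rw [← preimage_mk_setOf_mul_comm]
    exact (isClosed_setOf_mul_comm.preimage (by fun_prop)).measurableSet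
  rw [mem_fcCenter_iff_finiteIndex_centralizer]
  refine ⟨fun _ h0 ↦ ?_, finiteIndex_of_measure_ne_zero μ hC⟩
  have := (centralizer {x}).index_mul_measure hC μ
  rw [h0, mul_zero] at this
  exact NeZero.ne (μ Set.univ) this.symm

theorem compl_coe_fcCenter :
    (fcCenter G : Set G)ᶜ = {x | μ (Prod.mk x ⁻¹' {p : G × G | p.1 * p.2 = p.2 * p.1}) = 0} := by
  ext x
  rw [Set.mem_compl_iff, Set.mem_ofPred_eq, preimage_mk_setOf_mul_comm, SetLike.mem_coe,
    mem_fcCenter_iff_measure_centralizer_ne_zero μ, not_not]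

theorem measurableSet_fcCenter : MeasurableSet (fcCenter G : Set G) := by
  rw [← compl_compl (fcCenter G : Set G), compl_coe_fcCenter Measure.haar]
  exact (isClosed_setOf_mul_comm.measurableSet_setOf_measure_preimage_mk_eq_zero _).compl

theorem measure_prod_setOf_mul_comm_le :
    μ.prod μ {p : G × G | p.1 * p.2 = p.2 * p.1} ≤ μ (fcCenter G) * μ (fcCenter G) := by
  set S := {p : G × G | p.1 * p.2 = p.2 * p.1}
  set F := (fcCenter G : Set G)
  have hnull : μ.prod μ (S ∩ Fᶜ ×ˢ Set.univ) = 0 := by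
    rw [compl_coe_fcCenter μ]
    exact isClosed_setOf_mul_comm.measure_prod_inter_setOf_measure_preimage_mk_eq_zero μ μ
  have hswap : μ.prod μ (Prod.swap ⁻¹' (S ∩ Fᶜ ×ˢ Set.univ)) = 0 := by
    change μ.prod μ (MeasurableEquiv.prodComm ⁻¹' _) = 0
    rw [← MeasurableEquiv.prodComm.map_apply]
    convert hnull using 2
    exact Measure.prod_swap
  have hcover : S ⊆ F ×ˢ F ∪ ((S ∩ Fᶜ ×ˢ Set.univ) ∪ Prod.swap ⁻¹' (S ∩ Fᶜ ×ˢ Set.univ)) := by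
    rintro ⟨x, y⟩ (hxy : x * y = y * x)
    by_cases hx : x ∈ F
    · by_cases hy : y ∈ F
      · exact Or.inl ⟨hx, hy⟩
      · exact Or.inr (Or.inr ⟨hxy.symm, hy, trivial⟩)
    · exact Or.inr (Or.inl ⟨hxy, hx, trivial⟩)
  calc μ.prod μ S ≤ μ.prod μ (F ×ˢ F) + 0 :=
        (measure_mono hcover).trans ((measure_union_le _ _).trans_eq
          (by rw [measure_union_null hnull hswap]))
    _ = μ F * μ F := by rw [add_zero, Measure.prod_prod]

end CompactGroup

theorem fcCenter_index_le_three_of_cp_gt_general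
    {G : Type*} [Group G] [TopologicalSpace G] [IsTopologicalGroup G] [CompactSpace G]
    [T2Space G] [MeasurableSpace G] [BorelSpace G]
    (μ : Measure G) [μ.IsHaarMeasure] [IsProbabilityMeasure μ]
    (h : (3 / 40 : ℝ) < ((μ.prod μ) {p : G × G | p.1 * p.2 = p.2 * p.1}).toReal) :
    (fcCenter G).FiniteIndex ∧ (fcCenter G).index ≤ 3 ∧ commutator G ≤ fcCenter G := by
  have hcp := measure_prod_setOf_mul_comm_le μ
  have hF : MeasurableSet (fcCenter G : Set G) := measurableSet_fcCenter
  have hμF : μ (fcCenter G) ≠ 0 := by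
    intro h0
    rw [h0, mul_zero, nonpos_iff_eq_zero] at hcp
    norm_num [hcp] at h
  have hfin := finiteIndex_of_measure_ne_zero μ hF hμF
  have hindex : ((fcCenter G).index : ℝ) * (μ (fcCenter G)).toReal = 1 := by
    simpa using congrArg ENNReal.toReal ((fcCenter G).index_mul_measure hF μ)
  have hcp' : ((μ.prod μ) {p : G × G | p.1 * p.2 = p.2 * p.1}).toReal ≤
      (μ (fcCenter G)).toReal * (μ (fcCenter G)).toReal := by
    simpa using ENNReal.toReal_mono (by finiteness) hcp
  have hle : (fcCenter G).index ≤ 3 := by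
    by_contra! h4
    have : (4 : ℝ) ≤ (fcCenter G).index := by exact_mod_cast h4
    nlinarith [ENNReal.toReal_nonneg (a := μ (fcCenter G))]
  exact ⟨hfin, hle, (fcCenter G).commutator_le_of_index_le_three hle⟩

/-- If `cp G > 3/40` then the FC-center has index at most `3` and
contains the derived subgroup. -/
theorem fcCenter_index_le_three_of_cp_gt
    {G : Type*} [Group G] [TopologicalSpace G] [IsTopologicalGroup G] [CompactSpace G]
    [T2Space G] [MeasurableSpace G] [BorelSpace G]
    (μ : Measure G) [μ.IsHaarMeasure] [μ.Regular] [IsProbabilityMeasure μ]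
    (h : (3 / 40 : ℝ) < ((μ.prod μ) {p : G × G | p.1 * p.2 = p.2 * p.1}).toReal) :
    (fcCenter G).FiniteIndex ∧ (fcCenter G).index ≤ 3 ∧ commutator G ≤ fcCenter G :=
  fcCenter_index_le_three_of_cp_gt_general μ h
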